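/- Let ℓ satisfy ℓ(z)+ℓ(−z)=1. Then for the pairwise-comparison losses L_PC and L̄_PC with K classes, E_{p(x,y)}[L_PC(f(x),y)] = (K−1)·E_{p̄(x,ȳ)}[L̄_PC(f(x),ȳ)] − K(K−1)/2 + (K−1) for any joint distribution p and its complementary distribution p̄. -/

import Mathlib

/-!
By the symmetry `ℓ z + ℓ (-z) = 1`, at every label the complementary loss and the ordinary
pairwise-comparison loss add up to `K - 1`, and summing the complementary loss over all labels
counts every unordered pair once, giving `K(K-1)/2`. Multiplying the complementary density by
`K - 1` turns the complementary risk into `∑_ȳ ∑_{y ≠ ȳ} E[L̄_PC(ȳ) p(y)]`; exchanging the two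
sums and inserting the two identities above leaves the ordinary risk plus `K(K-1)/2 - (K-1)`.
-/

open MeasureTheory Finset

noncomputable section PairwiseComparison

variable {ι : Type*} [Fintype ι]

theorem card_sub_one_ne_zero [Nontrivial ι] : (Fintype.card ι : ℝ) - 1 ≠ 0 := by
  rw [sub_ne_zero]
  exact_mod_cast (Fintype.one_lt_card (α := ι)).ne'

variable [DecidableEq ι]

theorem sum_sum_filter_ne_comm {M : Type*} [AddCommMonoid M] (F : ι → ι → M) :
    ∑ b, ∑ a ∈ univ.filter (· ≠ b), F a b = ∑ a, ∑ b ∈ univ.filter (· ≠ a), F a b :=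
  sum_comm' fun b a => by simp [ne_comm]

theorem sum_filter_ne_eq_sub (f : ι → ℝ) (b : ι) :
    ∑ a ∈ univ.filter (· ≠ b), f a = ∑ a, f a - f b := by
  rw [filter_ne', sum_erase_eq_sub (mem_univ b)]

theorem card_filter_ne (b : ι) :
    ((univ.filter (· ≠ b)).card : ℝ) = Fintype.card ι - 1 := by
  rw [filter_ne', card_erase_of_mem (mem_univ b), card_univ,
    Nat.cast_pred (Fintype.card_pos_iff.mpr ⟨b⟩)]

def pcLoss (ℓ : ℝ → ℝ) (s : ι → ℝ) (y : ι) : ℝ :=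
  ∑ y' ∈ univ.filter (· ≠ y), ℓ (s y - s y')

def compPcLoss (ℓ : ℝ → ℝ) (s : ι → ℝ) (yb : ι) : ℝ :=
  ∑ y' ∈ univ.filter (· ≠ yb), ℓ (s y' - s yb)

variable {ℓ : ℝ → ℝ}

theorem compPcLoss_add_pcLoss (hsym : ∀ z, ℓ z + ℓ (-z) = 1) (s : ι → ℝ) (y : ι) :
    compPcLoss ℓ s y + pcLoss ℓ s y = Fintype.card ι - 1 := by
  have hpair : ∀ y', ℓ (s y' - s y) + ℓ (s y - s y') = 1 := fun y' => by
    simpa only [neg_sub] using hsym (s y' - s y)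
  rw [compPcLoss, pcLoss, ← sum_add_distrib, sum_congr rfl fun y' _ => hpair y', sum_const,
    nsmul_one, card_filter_ne]

theorem sum_compPcLoss (hsym : ∀ z, ℓ z + ℓ (-z) = 1) (s : ι → ℝ) :
    ∑ yb, compPcLoss ℓ s yb = Fintype.card ι * (Fintype.card ι - 1) / 2 := by
  have hswap : ∑ yb, compPcLoss ℓ s yb = ∑ y, pcLoss ℓ s y :=
    sum_sum_filter_ne_comm fun a b => ℓ (s a - s b)
  have htotal :
      ∑ y, (compPcLoss ℓ s y + pcLoss ℓ s y) = Fintype.card ι * (Fintype.card ι - 1) := by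
    simp [compPcLoss_add_pcLoss hsym, mul_sub]
  rw [sum_add_distrib, ← hswap] at htotal
  linarith

theorem sum_filter_ne_compPcLoss (hsym : ∀ z, ℓ z + ℓ (-z) = 1) (s : ι → ℝ) (y : ι) :
    ∑ yb ∈ univ.filter (· ≠ y), compPcLoss ℓ s yb
      = Fintype.card ι * (Fintype.card ι - 1) / 2 - (Fintype.card ι - 1) + pcLoss ℓ s y := by
  rw [sum_filter_ne_eq_sub, sum_compPcLoss hsym]
  linarith [compPcLoss_add_pcLoss hsym s y]

variable {X : Type*} [MeasurableSpace X]

/-- `p x y` is the density of the joint distribution of `(x, y)` with respect to `ν × counting`. -/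
def pcRisk (ν : Measure X) (ℓ : ℝ → ℝ) (g : ι → X → ℝ) (p : X → ι → ℝ) : ℝ :=
  ∑ y, ∫ x, pcLoss ℓ (g · x) y * p x y ∂ν

def compPcRisk (ν : Measure X) (ℓ : ℝ → ℝ) (g : ι → X → ℝ) (pbar : X → ι → ℝ) : ℝ :=
  ∑ yb, ∫ x, compPcLoss ℓ (g · x) yb * pbar x yb ∂ν

def compDensity (p : X → ι → ℝ) (x : X) (yb : ι) : ℝ :=
  (1 / ((Fintype.card ι : ℝ) - 1)) * ∑ y ∈ univ.filter (· ≠ yb), p x y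

variable (ν : Measure X) {g : ι → X → ℝ} {p : X → ι → ℝ}

theorem integrable_of_integrable_pcLoss_mul [Nontrivial ι] (hsym : ∀ z, ℓ z + ℓ (-z) = 1)
    (y : ι) (hL : Integrable (fun x => pcLoss ℓ (g · x) y * p x y) ν)
    (hLbar : Integrable (fun x => compPcLoss ℓ (g · x) y * p x y) ν) :
    Integrable (fun x => p x y) ν := by
  refine ((hLbar.add hL).const_mul ((Fintype.card ι : ℝ) - 1)⁻¹).congr (ae_of_all _ fun x => ?_)
  simp only [Pi.add_apply, ← add_mul, compPcLoss_add_pcLoss hsym,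
    inv_mul_cancel_left₀ card_sub_one_ne_zero]

theorem pcRisk_eq_compPcRisk [Nontrivial ι] (hsym : ∀ z, ℓ z + ℓ (-z) = 1)
    (hprob : ∑ y, ∫ x, p x y ∂ν = 1)
    (hL : ∀ y, Integrable (fun x => pcLoss ℓ (g · x) y * p x y) ν)
    (hLbar : ∀ yb y, Integrable (fun x => compPcLoss ℓ (g · x) yb * p x y) ν) :
    pcRisk ν ℓ g p = ((Fintype.card ι : ℝ) - 1) * compPcRisk ν ℓ g (compDensity p)
      - Fintype.card ι * ((Fintype.card ι : ℝ) - 1) / 2 + ((Fintype.card ι : ℝ) - 1) := by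
  set c : ℝ := (Fintype.card ι : ℝ) - 1
  have hscaled : c * compPcRisk ν ℓ g (compDensity p)
      = ∑ y, ∫ x, (∑ yb ∈ univ.filter (· ≠ y), compPcLoss ℓ (g · x) yb) * p x y ∂ν := calc
    _ = ∑ yb, ∑ y ∈ univ.filter (· ≠ yb), ∫ x, compPcLoss ℓ (g · x) yb * p x y ∂ν := by
      rw [compPcRisk, mul_sum]
      refine sum_congr rfl fun yb _ => ?_
      have hpull : ∀ x, compPcLoss ℓ (g · x) yb * compDensity p x yb
          = 1 / c * ∑ y ∈ univ.filter (· ≠ yb), compPcLoss ℓ (g · x) yb * p x y := fun x => by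
        rw [compDensity, mul_left_comm, mul_sum]
      simp only [hpull, integral_const_mul, ← integral_finsetSum _ fun y _ => hLbar yb y]
      rw [← mul_assoc, mul_one_div_cancel card_sub_one_ne_zero, one_mul]
    _ = ∑ y, ∑ yb ∈ univ.filter (· ≠ y), ∫ x, compPcLoss ℓ (g · x) yb * p x y ∂ν :=
      sum_sum_filter_ne_comm _
    _ = _ := by
      refine sum_congr rfl fun y _ => ?_
      rw [← integral_finsetSum _ fun yb _ => hLbar yb y]
      simp only [sum_mul]
  have hsplit : ∀ y, ∫ x, (∑ yb ∈ univ.filter (· ≠ y), compPcLoss ℓ (g · x) yb) * p x y ∂ν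
      = (Fintype.card ι * c / 2 - c) * ∫ x, p x y ∂ν + ∫ x, pcLoss ℓ (g · x) y * p x y ∂ν :=
        fun y => by
    simp only [sum_filter_ne_compPcLoss hsym, add_mul]
    have hp := integrable_of_integrable_pcLoss_mul ν hsym y (hL y) (hLbar y y)
    rw [integral_add (hp.const_mul _) (hL y), integral_const_mul]
  have : c * compPcRisk ν ℓ g (compDensity p) = Fintype.card ι * c / 2 - c + pcRisk ν ℓ g p := by
    rw [hscaled, sum_congr rfl fun y _ => hsplit y, sum_add_distrib, ← mul_sum, hprob, mul_one,
      pcRisk]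
  linarith

end PairwiseComparison

theorem PC_risk_from_complementary_labels_general
    {X : Type*} [MeasurableSpace X] (ν : Measure X)
    (K : ℕ) (hK : 2 ≤ K)
    (ℓ : ℝ → ℝ) (hsym : ∀ z : ℝ, ℓ z + ℓ (-z) = 1)
    (g : Fin K → X → ℝ)
    (p : X → Fin K → ℝ)
    (hprob : ∑ y : Fin K, ∫ x, p x y ∂ν = 1)
    (hintL : ∀ y : Fin K, Integrable (fun x =>
      (∑ y' ∈ Finset.univ.filter (fun y' => y' ≠ y), ℓ (g y x - g y' x)) * p x y) ν)
    (hintLbar : ∀ yb y : Fin K, Integrable (fun x =>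
      (∑ y' ∈ Finset.univ.filter (fun y' => y' ≠ yb), ℓ (g y' x - g yb x)) * p x y) ν) :
    ∑ y : Fin K, ∫ x,
        (∑ y' ∈ Finset.univ.filter (fun y' => y' ≠ y), ℓ (g y x - g y' x)) * p x y ∂ν
      = ((K : ℝ) - 1) *
          (∑ yb : Fin K, ∫ x,
            (∑ y' ∈ Finset.univ.filter (fun y' => y' ≠ yb), ℓ (g y' x - g yb x)) *
              ((1 / ((K : ℝ) - 1)) * ∑ y ∈ Finset.univ.filter (fun y => y ≠ yb), p x y) ∂ν)
        - (K : ℝ) * ((K : ℝ) - 1) / 2 + ((K : ℝ) - 1) := by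
  have : Nontrivial (Fin K) := Fin.nontrivial_iff_two_le.mpr hK
  have h := pcRisk_eq_compPcRisk ν hsym hprob hintL hintLbar
  simp only [pcRisk, compPcRisk, compDensity, pcLoss, compPcLoss, Fintype.card_fin] at h
  exact h

/-- For a symmetric binary loss, the PC risk equals `(K−1)` times the complementary PC risk
minus `K(K−1)/2` plus `K−1`. -/
theorem PC_risk_from_complementary_labels
    {X : Type*} [MeasurableSpace X] (ν : Measure X)
    (K : ℕ) (hK : 2 ≤ K)
    (ℓ : ℝ → ℝ) (hsym : ∀ z : ℝ, ℓ z + ℓ (-z) = 1)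
    (g : Fin K → X → ℝ)
    (p : X → Fin K → ℝ)
    (hp : ∀ x y, 0 ≤ p x y)
    (hprob : ∑ y : Fin K, ∫ x, p x y ∂ν = 1)
    (hintL : ∀ y : Fin K, Integrable (fun x =>
      (∑ y' ∈ Finset.univ.filter (fun y' => y' ≠ y), ℓ (g y x - g y' x)) * p x y) ν)
    (hintLbar : ∀ yb y : Fin K, Integrable (fun x =>
      (∑ y' ∈ Finset.univ.filter (fun y' => y' ≠ yb), ℓ (g y' x - g yb x)) * p x y) ν) :
    ∑ y : Fin K, ∫ x,
        (∑ y' ∈ Finset.univ.filter (fun y' => y' ≠ y), ℓ (g y x - g y' x)) * p x y ∂ν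
      = ((K : ℝ) - 1) *
          (∑ yb : Fin K, ∫ x,
            (∑ y' ∈ Finset.univ.filter (fun y' => y' ≠ yb), ℓ (g y' x - g yb x)) *
              ((1 / ((K : ℝ) - 1)) * ∑ y ∈ Finset.univ.filter (fun y => y ≠ yb), p x y) ∂ν)
        - (K : ℝ) * ((K : ℝ) - 1) / 2 + ((K : ℝ) - 1) :=
  PC_risk_from_complementary_labels_general ν K hK ℓ hsym g p hprob hintL hintLbar
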